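/- arXiv:1807.01626 — 4 statements merged into one kernel-verified Lean document; each statement's English description precedes it below -/
import Mathlib

section
/- The full 2-shift (({0,1}^ℕ, d), σ), where d(x,y) = 2^{-inf{j : x_j ≠ y_j}} and σ is the left shift, possesses an uncountable set Λ such that every pair of distinct points in Λ is distributionally scrambled of type 1: for all distinct x̂, ŷ ∈ Λ and every δ ∈ (0,1], Φ*_{(σ,x̂,ŷ)}(δ) = 1 and Φ_{(σ,x̂,ŷ)}(δ) = 0. -/
open Filter

noncomputable def Phi {α : Type*} (d : α → α → ℝ) (f : α → α) (x y : α) (δ : ℝ) : ℝ :=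
  liminf (fun n : ℕ =>
    (((Finset.range (n+1)).filter (fun k => d (f^[k] x) (f^[k] y) < δ)).card : ℝ) / n) atTop

noncomputable def PhiStar {α : Type*} (d : α → α → ℝ) (f : α → α) (x y : α) (δ : ℝ) : ℝ :=
  limsup (fun n : ℕ =>
    (((Finset.range (n+1)).filter (fun k => d (f^[k] x) (f^[k] y) < δ)).card : ℝ) / n) atTop

open Classical in
noncomputable def shiftDist (x y : ℕ → Bool) : ℝ :=
  if x = y then 0 else (2:ℝ)⁻¹ ^ (sInf {j | x j ≠ y j})

def shift (x : ℕ → Bool) : ℕ → Bool := fun n => x (n+1)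

noncomputable def diamX (X : Type*) [MetricSpace X] : ℝ := Metric.diam (Set.univ : Set X)

namespace DC6

def T (n : ℕ) : ℕ := (n+1).factorial

lemma T_pos (n : ℕ) : 0 < T n := Nat.factorial_pos _

lemma le_T (n : ℕ) : n + 1 ≤ T n := Nat.self_le_factorial _

lemma T_succ (n : ℕ) : T (n+1) = (n+2) * T n := Nat.factorial_succ _

lemma T_mono : Monotone T := fun a b h => Nat.factorial_le (by omega)

lemma T_lt_succ (n : ℕ) : T n < T (n+1) := by
  have := T_pos n; rw [T_succ]; nlinarith

noncomputable def B (k : ℕ) : ℕ := Nat.find (⟨k, by have := le_T k; omega⟩ : ∃ n, k < T n)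

lemma lt_T_B (k : ℕ) : k < T (B k) :=
  Nat.find_spec (⟨k, by have := le_T k; omega⟩ : ∃ n, k < T n)

lemma B_eq {n k : ℕ} (h1 : T n ≤ k) (h2 : k < T (n+1)) : B k = n + 1 := by
  rw [B, Nat.find_eq_iff]
  refine ⟨h2, fun m hm hlt => ?_⟩
  exact absurd hlt (not_lt.2 ((T_mono (by omega)).trans h1))

noncomputable def val (s : ℕ → Bool) (n : ℕ) : Bool :=
  if n % 2 = 1 then s (Nat.unpair (n / 2)).1 else false

noncomputable def xseq (s : ℕ → Bool) (k : ℕ) : Bool := val s (B k)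

lemma val_even {s : ℕ → Bool} {n : ℕ} (h : n % 2 = 0) : val s n = false := by
  rw [val, if_neg (by omega)]

lemma val_odd (s : ℕ → Bool) (p : ℕ) : val s (2 * p + 1) = s (Nat.unpair p).1 := by
  rw [val, if_pos (by omega)]
  have h2 : (2 * p + 1) / 2 = p := by omega
  rw [h2]

lemma xseq_block {s : ℕ → Bool} {n k : ℕ} (h1 : T n ≤ k) (h2 : k < T (n+1)) :
    xseq s k = val s (n+1) := by rw [xseq, B_eq h1 h2]

lemma xseq_inj : Function.Injective xseq := by
  intro s s' h
  funext i
  set n := 2 * Nat.pair i 0 with hn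
  have h1 : T n ≤ T n := le_rfl
  have h2 : T n < T (n+1) := T_lt_succ n
  have := congrFun h (T n)
  rw [xseq_block h1 h2, xseq_block h1 h2, hn, val_odd, val_odd, Nat.unpair_pair] at this
  exact this

lemma shift_iter (x : ℕ → Bool) (k : ℕ) : shift^[k] x = fun n => x (n + k) := by
  induction k with
  | zero => simp
  | succ k ih =>
    rw [Function.iterate_succ_apply', ih]
    funext n
    show x (n + 1 + k) = x (n + (k+1))
    congr 1
    omega

lemma not_close {x y : ℕ → Bool} {k : ℕ} (h : x k ≠ y k) {δ : ℝ} (hδ : δ ≤ 1) :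
    ¬ shiftDist (shift^[k] x) (shift^[k] y) < δ := by
  rw [shift_iter, shift_iter, shiftDist]
  have hne : (fun n => x (n + k)) ≠ (fun n => y (n + k)) := by
    intro he
    exact h (by simpa using congrFun he 0)
  rw [if_neg hne]
  have h0 : sInf {j | (fun n => x (n + k)) j ≠ (fun n => y (n + k)) j} = 0 :=
    Nat.sInf_eq_zero.2 (Or.inl (by simpa using h))
  rw [h0, pow_zero]
  linarith

lemma close {x y : ℕ → Bool} {k m : ℕ} (h : ∀ j ≤ m, x (j + k) = y (j + k)) {δ : ℝ}
    (hδ0 : 0 < δ) (hδ : (2:ℝ)⁻¹ ^ m < δ) :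
    shiftDist (shift^[k] x) (shift^[k] y) < δ := by
  rw [shift_iter, shift_iter, shiftDist]
  split_ifs with he
  · exact hδ0
  · set S : Set ℕ := {j | (fun n => x (n + k)) j ≠ (fun n => y (n + k)) j} with hS
    have hSne : S.Nonempty := by
      rcases Function.ne_iff.1 he with ⟨j, hj⟩
      exact ⟨j, hj⟩
    have hmem : sInf S ∈ S := Nat.sInf_mem hSne
    have hms : m < sInf S := by
      by_contra hc
      exact hmem (h _ (not_lt.1 hc))
    calc (2:ℝ)⁻¹ ^ sInf S ≤ (2:ℝ)⁻¹ ^ m :=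
          pow_le_pow_of_le_one (by norm_num) (by norm_num) hms.le
      _ < δ := hδ

end DC6

namespace DC6

lemma real_le_of_forall_pos {a b : ℝ} (h : ∀ ε : ℝ, 0 < ε → a ≤ b + ε) : a ≤ b := by
  by_contra hc
  push_neg at hc
  have := h ((a - b)/2) (by linarith)
  linarith

noncomputable def u (x y : ℕ → Bool) (δ : ℝ) : ℕ → ℝ := fun n =>
  (((Finset.range (n+1)).filter (fun k => shiftDist (shift^[k] x) (shift^[k] y) < δ)).card : ℝ) / n

lemma u_nonneg (x y : ℕ → Bool) (δ : ℝ) (n : ℕ) : 0 ≤ u x y δ n :=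
  div_nonneg (Nat.cast_nonneg _) (Nat.cast_nonneg _)

lemma card_le (x y : ℕ → Bool) (δ : ℝ) (n : ℕ) :
    ((Finset.range (n+1)).filter (fun k => shiftDist (shift^[k] x) (shift^[k] y) < δ)).card ≤ n+1 :=
  (Finset.card_filter_le _ _).trans (le_of_eq (Finset.card_range _))

lemma bdd_above (x y : ℕ → Bool) (δ : ℝ) : IsBoundedUnder (· ≤ ·) atTop (u x y δ) := by
  refine ⟨2, eventually_map.2 (eventually_atTop.2 ⟨1, fun n hn => ?_⟩)⟩
  have hc := card_le x y δ n
  have hn0 : (0:ℝ) < n := by exact_mod_cast hn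
  simp only [u]
  rw [div_le_iff₀ hn0]
  have : ((Finset.filter (fun k => shiftDist (shift^[k] x) (shift^[k] y) < δ)
      (Finset.range (n+1))).card : ℝ) ≤ (n:ℝ) + 1 := by exact_mod_cast hc
  have h1 : (1:ℝ) ≤ n := by exact_mod_cast hn
  linarith

lemma bdd_below (x y : ℕ → Bool) (δ : ℝ) : IsBoundedUnder (· ≥ ·) atTop (u x y δ) :=
  ⟨0, eventually_map.2 (Eventually.of_forall (u_nonneg x y δ))⟩

section main

variable {s s' : ℕ → Bool} {δ : ℝ}

/-- frequently the proportion is ≥ 1 - ε : end of long even blocks -/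
lemma freq_one (hδ0 : 0 < δ) (ε : ℝ) (hε : 0 < ε) :
    ∃ᶠ N in atTop, 1 - ε ≤ u (xseq s) (xseq s') δ N := by
  obtain ⟨m, hm⟩ := exists_pow_lt_of_lt_one hδ0 (by norm_num : (2:ℝ)⁻¹ < 1)
  rw [frequently_atTop]
  intro M
  obtain ⟨c₀, hc₀⟩ := exists_nat_ge (1/ε)
  set c := max M (max m c₀) with hc
  set n := 2*c+1 with hn
  set N := T (n+1) - 1 with hN
  have hTpos := T_pos (n+1)
  have hTn := T_pos n
  have hleT := le_T (n+1)  -- n+2 ≤ T (n+1)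
  have hleTn := le_T n     -- n+1 ≤ T n
  have hMN : M ≤ N := by omega
  refine ⟨N, hMN, ?_⟩
  -- counting
  have hsub : Finset.Ico (T n) (T (n+1) - m) ⊆
      (Finset.range (N+1)).filter (fun k => shiftDist (shift^[k] (xseq s)) (shift^[k] (xseq s')) < δ) := by
    intro k hk
    rw [Finset.mem_Ico] at hk
    rw [Finset.mem_filter, Finset.mem_range]
    refine ⟨by omega, ?_⟩
    apply close (m := m) _ hδ0 hm
    intro j hj
    have hjk : T n ≤ j + k := hk.1.trans (Nat.le_add_left k j)
    have hjk2 : j + k < T (n+1) := by omega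
    rw [xseq_block hjk hjk2, xseq_block hjk hjk2,
      val_even (by omega), val_even (by omega)]
  have hcard : T (n+1) ≤ ((Finset.range (N+1)).filter
      (fun k => shiftDist (shift^[k] (xseq s)) (shift^[k] (xseq s')) < δ)).card + (m + T n) := by
    have h1 := Finset.card_le_card hsub
    rw [Nat.card_Ico] at h1
    omega
  -- real arithmetic
  have hNpos : (0:ℝ) < N := by exact_mod_cast (by omega : 0 < N)
  simp only [u]
  rw [le_div_iff₀ hNpos]
  have hc1 : (T (n+1) : ℝ) ≤ (((Finset.range (N+1)).filter
      (fun k => shiftDist (shift^[k] (xseq s)) (shift^[k] (xseq s')) < δ)).card : ℝ)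
      + (m + T n) := by exact_mod_cast hcard
  generalize hgen : (((Finset.range (N+1)).filter
      (fun k => shiftDist (shift^[k] (xseq s)) (shift^[k] (xseq s')) < δ)).card : ℝ) = q at hc1 ⊢
  clear hsub hcard hgen
  have hA : ((T (n+1) : ℝ)) = ((n:ℝ)+2) * T n := by
    have := T_succ n
    push_cast [this]
    ring
  have hcN : (N:ℝ) = (T (n+1) : ℝ) - 1 := by
    rw [hN]
    push_cast [Nat.cast_sub (by omega : 1 ≤ T (n+1))]
    ring
  have ha1 : (1:ℝ) ≤ (T n : ℝ) := by exact_mod_cast hTn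
  have hma : (m:ℝ) ≤ (T n : ℝ) := by exact_mod_cast (by omega : m ≤ T n)
  have hε2 : 2 ≤ ε * ((n:ℝ)+1) := by
    have h1 : (1:ℝ)/ε ≤ c₀ := hc₀
    have h2 : (c₀:ℝ) ≤ c := by exact_mod_cast (by omega : c₀ ≤ c)
    have h3 : 1 ≤ ε * c := by
      rw [div_le_iff₀ hε] at h1
      nlinarith
    have h4 : ((n:ℝ)+1) = 2*(c:ℝ)+2 := by push_cast [hn]; ring
    nlinarith
  have k1 : 2 * (T n : ℝ) ≤ (ε * ((n:ℝ)+1)) * T n :=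
    mul_le_mul_of_nonneg_right hε2 (by linarith)
  have k2 : ε * (((n:ℝ)+1) * T n) ≤ ε * (((n:ℝ)+2) * T n - 1) := by
    apply mul_le_mul_of_nonneg_left _ hε.le
    nlinarith [ha1]
  have hassoc : (ε * ((n:ℝ)+1)) * (T n : ℝ) = ε * (((n:ℝ)+1) * T n) := mul_assoc _ _ _
  have k3 : (m:ℝ) + T n - 1 ≤ ε * (((n:ℝ)+2) * (T n:ℝ) - 1) := by linarith
  have hc1' : ((n:ℝ)+2) * (T n:ℝ) ≤ q + (m + T n) := by rw [← hA]; exact hc1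
  rw [hcN, hA]
  have hexp : (1-ε) * (((n:ℝ)+2) * (T n:ℝ) - 1)
      = (((n:ℝ)+2) * (T n:ℝ) - 1) - ε * (((n:ℝ)+2) * (T n:ℝ) - 1) := by ring
  linarith

/-- frequently the proportion is ≤ ε : end of long odd blocks where values differ -/
lemma freq_zero (hδ1 : δ ≤ 1) {i : ℕ} (hi : s i ≠ s' i) (ε : ℝ) (hε : 0 < ε) :
    ∃ᶠ N in atTop, u (xseq s) (xseq s') δ N ≤ ε := by
  rw [frequently_atTop]
  intro M
  obtain ⟨c₀, hc₀⟩ := exists_nat_ge (1/ε)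
  set j := max M c₀ with hj
  set w := Nat.pair i j with hw
  have hjw : j ≤ w := Nat.right_le_pair i j
  set n := 2*w with hn
  set N := T (n+1) - 1 with hN
  have hTpos := T_pos (n+1)
  have hTn := T_pos n
  have hleT := le_T (n+1)
  have hleTn := le_T n
  have hMN : M ≤ N := by omega
  refine ⟨N, hMN, ?_⟩
  have hval : val s (n+1) ≠ val s' (n+1) := by
    rw [show n+1 = 2*w+1 from rfl, val_odd, val_odd, hw, Nat.unpair_pair]
    exact hi
  have hsub : (Finset.range (N+1)).filter
      (fun k => shiftDist (shift^[k] (xseq s)) (shift^[k] (xseq s')) < δ) ⊆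
      Finset.range (T n) := by
    intro k hk
    rw [Finset.mem_filter, Finset.mem_range] at hk
    rw [Finset.mem_range]
    by_contra hge
    push_neg at hge
    have hkT : k < T (n+1) := by omega
    refine not_close ?_ hδ1 hk.2
    rw [xseq_block hge hkT, xseq_block hge hkT]
    exact hval
  have hcard : ((Finset.range (N+1)).filter
      (fun k => shiftDist (shift^[k] (xseq s)) (shift^[k] (xseq s')) < δ)).card ≤ T n := by
    have := Finset.card_le_card hsub
    rwa [Finset.card_range] at this
  have hNpos : (0:ℝ) < N := by exact_mod_cast (by omega : 0 < N)
  simp only [u]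
  rw [div_le_iff₀ hNpos]
  have hc1 : (((Finset.range (N+1)).filter
      (fun k => shiftDist (shift^[k] (xseq s)) (shift^[k] (xseq s')) < δ)).card : ℝ) ≤ T n := by
    exact_mod_cast hcard
  generalize hgen : (((Finset.range (N+1)).filter
      (fun k => shiftDist (shift^[k] (xseq s)) (shift^[k] (xseq s')) < δ)).card : ℝ) = q at hc1 ⊢
  clear hsub hcard hgen hval
  have hA : ((T (n+1) : ℝ)) = ((n:ℝ)+2) * T n := by
    have := T_succ n
    push_cast [this]
    ring
  have hcN : (N:ℝ) = (T (n+1) : ℝ) - 1 := by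
    rw [hN]
    push_cast [Nat.cast_sub (by omega : 1 ≤ T (n+1))]
    ring
  have ha1 : (1:ℝ) ≤ (T n : ℝ) := by exact_mod_cast hTn
  have hε1 : 1 ≤ ε * ((n:ℝ)+1) := by
    have h1 : (1:ℝ)/ε ≤ c₀ := hc₀
    have h2 : (c₀:ℝ) ≤ (n:ℝ)+1 := by exact_mod_cast (by omega : c₀ ≤ n+1)
    rw [div_le_iff₀ hε] at h1
    nlinarith
  refine hc1.trans ?_
  rw [hcN, hA]
  have k1 : (T n : ℝ) ≤ (ε * ((n:ℝ)+1)) * T n := by nlinarith [hε1, ha1]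
  have k2 : ε * (((n:ℝ)+1) * T n) ≤ ε * (((n:ℝ)+2) * T n - 1) := by
    apply mul_le_mul_of_nonneg_left _ hε.le
    nlinarith [ha1]
  have hassoc : (ε * ((n:ℝ)+1)) * (T n : ℝ) = ε * (((n:ℝ)+1) * T n) := mul_assoc _ _ _
  linarith

end main

end DC6

namespace DC6

lemma uncountable : ¬ (Set.range xseq).Countable := by
  intro hc
  haveI := hc.to_subtype
  haveI : Countable (ℕ → Bool) := Countable.of_equiv _ (Equiv.ofInjective _ xseq_inj).symm
  obtain ⟨f, hf⟩ := exists_surjective_nat (ℕ → Bool)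
  obtain ⟨n, hn⟩ := hf (fun k => !(f k k))
  have := congrFun hn n
  simp at this

end DC6

theorem stmt6 :
    ∃ Λ : Set (ℕ → Bool), ¬ Λ.Countable ∧
      ∀ x ∈ Λ, ∀ y ∈ Λ, x ≠ y → ∀ δ : ℝ, 0 < δ → δ ≤ 1 →
        PhiStar shiftDist shift x y δ = 1 ∧ Phi shiftDist shift x y δ = 0 := by
  refine ⟨Set.range DC6.xseq, DC6.uncountable, ?_⟩
  rintro x ⟨s, rfl⟩ y ⟨s', rfl⟩ hxy δ hδ0 hδ1
  have hss' : s ≠ s' := fun h => hxy (by rw [h])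
  obtain ⟨i, hi⟩ := Function.ne_iff.1 hss'
  have hPhiStar : PhiStar shiftDist shift (DC6.xseq s) (DC6.xseq s') δ
      = limsup (DC6.u (DC6.xseq s) (DC6.xseq s') δ) atTop := rfl
  have hPhi : Phi shiftDist shift (DC6.xseq s) (DC6.xseq s') δ
      = liminf (DC6.u (DC6.xseq s) (DC6.xseq s') δ) atTop := rfl
  have hBddAbove := DC6.bdd_above (DC6.xseq s) (DC6.xseq s') δ
  have hBddBelow := DC6.bdd_below (DC6.xseq s) (DC6.xseq s') δ
  have hCobLe : IsCoboundedUnder (· ≤ ·) atTop (DC6.u (DC6.xseq s) (DC6.xseq s') δ) :=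
    hBddBelow.isCoboundedUnder_le
  have hCobGe : IsCoboundedUnder (· ≥ ·) atTop (DC6.u (DC6.xseq s) (DC6.xseq s') δ) :=
    hBddAbove.isCoboundedUnder_ge
  constructor
  · rw [hPhiStar]
    apply le_antisymm
    · apply DC6.real_le_of_forall_pos
      intro ε hε
      apply limsup_le_of_le hCobLe
      obtain ⟨c₀, hc₀⟩ := exists_nat_ge (1/ε)
      refine eventually_atTop.2 ⟨max 1 c₀, fun n hn => ?_⟩
      have hn1 : 1 ≤ n := le_trans (le_max_left _ _) hn
      have hnc : c₀ ≤ n := le_trans (le_max_right _ _) hn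
      have hn0 : (0:ℝ) < n := by exact_mod_cast hn1
      have hcard := DC6.card_le (DC6.xseq s) (DC6.xseq s') δ n
      have hcard' : ((((Finset.range (n+1)).filter
          (fun k => shiftDist (shift^[k] (DC6.xseq s)) (shift^[k] (DC6.xseq s')) < δ)).card : ℝ))
          ≤ (n:ℝ) + 1 := by exact_mod_cast hcard
      have hεn : 1 ≤ ε * n := by
        rw [div_le_iff₀ hε] at hc₀
        have : (c₀:ℝ) ≤ n := by exact_mod_cast hnc
        nlinarith
      show DC6.u (DC6.xseq s) (DC6.xseq s') δ n ≤ 1 + ε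
      simp only [DC6.u]
      rw [div_le_iff₀ hn0]
      nlinarith
    · apply DC6.real_le_of_forall_pos
      intro ε hε
      have h := le_limsup_of_frequently_le (DC6.freq_one hδ0 ε hε) hBddAbove
      linarith
  · rw [hPhi]
    apply le_antisymm
    · apply DC6.real_le_of_forall_pos
      intro ε hε
      have h := liminf_le_of_frequently_le (DC6.freq_zero hδ1 hi ε hε) hBddBelow
      linarith
    · exact le_liminf_of_le hCobGe
        (Eventually.of_forall (DC6.u_nonneg (DC6.xseq s) (DC6.xseq s') δ))
end

section
/- Let (a_i)_{i≥1} be an increasing sequence of positive integers with (b_n + n)/a_{n+1} → 0 as n → ∞, where b_n = a_1 + ⋯ + a_n. Then a_n / b_n → 1 as n → ∞. -/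
/-! Since `b (n+1) = b n + a (n+1)`, the ratio `a (n+1) / b (n+1)` equals
`(b n / a (n+1) + 1)⁻¹`, and `b n / a (n+1) ≤ (b n + n) / a (n+1) → 0`. -/

open Filter Topology

lemma tendsto_div_add_self_of_tendsto_div_zero {ι : Type*} {l : Filter ι} {u v : ι → ℝ}
    (hv : ∀ᶠ i in l, v i ≠ 0) (h : Tendsto (fun i => u i / v i) l (𝓝 0)) :
    Tendsto (fun i => v i / (u i + v i)) l (𝓝 1) := by
  have hlim : Tendsto (fun i => (u i / v i + 1)⁻¹) l (𝓝 1) := by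
    simpa using (h.add_const 1).inv₀ (by norm_num)
  refine hlim.congr' (hv.mono fun i hvi => ?_)
  rw [div_add_one hvi, inv_div]

theorem stmt7_general (a : ℕ → ℕ) (hpos : ∀ i, 1 ≤ i → 0 < a i)
    (b : ℕ → ℕ) (hb : ∀ n, b n = ∑ i ∈ Finset.Icc 1 n, a i)
    (hab : Filter.Tendsto (fun n : ℕ => ((b n + n : ℕ) : ℝ) / (a (n+1) : ℝ)) atTop (nhds 0)) :
    Filter.Tendsto (fun n : ℕ => (a n : ℝ) / (b n : ℝ)) atTop (nhds 1) := by
  have hsucc : ∀ n, b (n + 1) = b n + a (n + 1) := fun n => by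
    rw [hb, hb, Finset.sum_Icc_succ_top (by omega)]
  have hsmall : Tendsto (fun n => (b n : ℝ) / a (n + 1)) atTop (𝓝 0) :=
    squeeze_zero (fun n => by positivity)
      (fun n => div_le_div_of_nonneg_right (by push_cast; linarith [(n.cast_nonneg : (0 : ℝ) ≤ n)])
        (a (n + 1)).cast_nonneg) hab
  have hratio := tendsto_div_add_self_of_tendsto_div_zero
    (Eventually.of_forall fun n => (Nat.cast_pos.2 (hpos (n + 1) (by omega))).ne') hsmall
  refine (tendsto_add_atTop_iff_nat 1).mp ?_
  simpa only [hsucc, Nat.cast_add] using hratio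

theorem stmt7 (a : ℕ → ℕ) (hpos : ∀ i, 1 ≤ i → 0 < a i)
    (hmono : ∀ i j, 1 ≤ i → i < j → a i < a j)
    (b : ℕ → ℕ) (hb : ∀ n, b n = ∑ i ∈ Finset.Icc 1 n, a i)
    (hab : Filter.Tendsto (fun n : ℕ => ((b n + n : ℕ) : ℝ) / (a (n+1) : ℝ)) atTop (nhds 0)) :
    Filter.Tendsto (fun n : ℕ => (a n : ℝ) / (b n : ℝ)) atTop (nhds 1) :=
  stmt7_general a hpos b hb hab
end

section
/- If every point of X except at most two points e₁, e₂ is eventually fixed under f (i.e., some iterate maps it to a fixed point), then X contains no three distinct points forming pairwise DC3 pairs; in fact any DC3 pair must include e₁ or e₂. -/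
open Filter

def DC3pair {X : Type*} [MetricSpace X] (f : X → X) (x y : X) : Prop :=
  ∃ a b : ℝ, 0 ≤ a ∧ a < b ∧
    ∀ δ ∈ Set.Ioo a b, Phi dist f x y δ < PhiStar dist f x y δ

/-!
If `d(fⁿx, fⁿy) → L`, then for every `δ ≠ L` the condition `d(fᵏx, fᵏy) < δ` is eventually
always true or eventually always false, so its frequency converges (to `1` or `0`) and
`Φ(δ) = Φ*(δ)`; hence `(x, y)` is not DC3. Two eventually fixed points have convergent orbit
distance by assumption. If `e₁` is not eventually fixed, neither is `f e₁`, so `f e₁ = e₂`, and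
likewise `f e₂ = e₁`: the two exceptional points then form a 2-cycle with constant orbit
distance. So no DC3 pair avoids `{e₁, e₂}` and `(e₁, e₂)` is not DC3, which rules out a DC3 triple.
-/

open Filter Finset Function Topology

section Frequency

variable {P : ℕ → Prop} [DecidablePred P]

theorem tendsto_card_filter_div_zero_of_eventually_not (h : ∀ᶠ k in atTop, ¬ P k) :
    Tendsto (fun n : ℕ => (#{k ∈ range (n + 1) | P k} : ℝ) / n) atTop (𝓝 0) := by
  obtain ⟨N, hN⟩ := eventually_atTop.1 h
  refine tendsto_of_tendsto_of_tendsto_of_le_of_le' tendsto_const_nhds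
    (tendsto_const_div_atTop_nhds_zero_nat (N : ℝ)) (Eventually.of_forall fun n => by positivity) ?_
  filter_upwards with n
  have hsub : {k ∈ range (n + 1) | P k} ⊆ range N := fun k hk => by
    simp only [mem_filter, mem_range] at hk ⊢
    by_contra! hNk
    exact hN k hNk hk.2
  have hcard : (#{k ∈ range (n + 1) | P k} : ℝ) ≤ N := by
    simpa using (Nat.cast_le (α := ℝ)).2 (card_le_card hsub)
  exact div_le_div_of_nonneg_right hcard n.cast_nonneg

theorem tendsto_card_filter_div_one_of_eventually (h : ∀ᶠ k in atTop, P k) :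
    Tendsto (fun n : ℕ => (#{k ∈ range (n + 1) | P k} : ℝ) / n) atTop (𝓝 1) := by
  have hnot := tendsto_card_filter_div_zero_of_eventually_not (P := fun k => ¬ P k)
    (by simpa using h)
  have hsucc : Tendsto (fun n : ℕ => ((n : ℝ) + 1) / n) atTop (𝓝 1) := by
    simpa using (tendsto_natCast_div_add_atTop (1 : ℝ)).inv₀ one_ne_zero
  have hdiff : Tendsto (fun n : ℕ => ((n : ℝ) + 1) / n - #{k ∈ range (n + 1) | ¬ P k} / n)
      atTop (𝓝 1) := by
    simpa using hsucc.sub hnot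
  refine hdiff.congr fun n => ?_
  have hsum := card_filter_add_card_filter_not (s := range (n + 1)) P
  rw [card_range] at hsum
  rw [sub_eq_iff_eq_add, ← add_div]
  exact_mod_cast congrArg (fun m : ℕ => (m : ℝ) / n) hsum.symm

end Frequency

theorem phi_eq_phiStar_of_tendsto {α : Type*} {d : α → α → ℝ} {f : α → α} {x y : α} {L δ : ℝ}
    (h : Tendsto (fun n : ℕ => d (f^[n] x) (f^[n] y)) atTop (𝓝 L)) (hδ : δ ≠ L) :
    Phi d f x y δ = PhiStar d f x y δ := by
  unfold Phi PhiStar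
  rcases hδ.lt_or_gt with hlt | hgt
  · have h0 := tendsto_card_filter_div_zero_of_eventually_not
      ((h.eventually_const_lt hlt).mono fun _ hk => not_lt.2 hk.le)
    rw [h0.liminf_eq, h0.limsup_eq]
  · have h1 := tendsto_card_filter_div_one_of_eventually (h.eventually_lt_const hgt)
    rw [h1.liminf_eq, h1.limsup_eq]

section DC3

variable {X : Type*} [MetricSpace X] {f : X → X}

theorem not_DC3pair_of_tendsto {x y : X} {L : ℝ}
    (h : Tendsto (fun n : ℕ => dist (f^[n] x) (f^[n] y)) atTop (𝓝 L)) : ¬ DC3pair f x y := by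
  rintro ⟨a, b, -, hab, hlt⟩
  obtain ⟨δ, hδ, hδL⟩ := ((Set.Ioo_infinite hab).sdiff (Set.finite_singleton L)).nonempty
  exact (hlt δ hδ).ne (phi_eq_phiStar_of_tendsto h hδL)

theorem DC3pair.symm {x y : X} (h : DC3pair f x y) : DC3pair f y x := by
  simpa only [DC3pair, Phi, PhiStar, dist_comm] using h

end DC3

theorem dist_iterate_of_swap {X : Type*} [PseudoMetricSpace X] {f : X → X} {a b : X}
    (ha : f a = b) (hb : f b = a) (n : ℕ) : dist (f^[n] a) (f^[n] b) = dist a b := by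
  induction n with
  | zero => rfl
  | succ n ih => rw [iterate_succ_apply, iterate_succ_apply, ha, hb, dist_comm, ih]

def IsEventuallyFixed {α : Type*} (f : α → α) (x : α) : Prop :=
  ∃ m : ℕ, f (f^[m] x) = f^[m] x

section EventuallyFixed

variable {α : Type*} {f : α → α}

theorem IsEventuallyFixed.of_apply {x : α} (h : IsEventuallyFixed f (f x)) :
    IsEventuallyFixed f x := by
  obtain ⟨m, hm⟩ := h
  exact ⟨m + 1, by rwa [iterate_succ_apply]⟩

theorem IsEventuallyFixed.of_isFixedPt {x : α} (h : IsFixedPt f x) : IsEventuallyFixed f x :=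
  ⟨0, h⟩

theorem isEventuallyFixed_or_swap {e₁ e₂ : α}
    (hev : ∀ x, x ≠ e₁ → x ≠ e₂ → IsEventuallyFixed f x) :
    (IsEventuallyFixed f e₁ ∧ IsEventuallyFixed f e₂) ∨ (f e₁ = e₂ ∧ f e₂ = e₁) := by
  have hmaps : ∀ e, ¬ IsEventuallyFixed f e → f e = e₁ ∨ f e = e₂ := fun e he => by
    by_contra! hne
    exact he (hev _ hne.1 hne.2).of_apply
  have hmoves : ∀ {e e'}, ¬ IsEventuallyFixed f e → f e = e' → e' ≠ e ∧ ¬ IsEventuallyFixed f e' :=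
    fun he hee' => ⟨fun h => he (.of_isFixedPt (hee'.trans h)), fun h' => he (hee' ▸ h').of_apply⟩
  by_cases h₁ : IsEventuallyFixed f e₁ <;> by_cases h₂ : IsEventuallyFixed f e₂
  · exact .inl ⟨h₁, h₂⟩
  · rcases hmaps e₂ h₂ with h | h
    · exact absurd h₁ (hmoves h₂ h).2
    · exact ((hmoves h₂ h).1 rfl).elim
  · rcases hmaps e₁ h₁ with h | h
    · exact ((hmoves h₁ h).1 rfl).elim
    · exact absurd h₂ (hmoves h₁ h).2
  · rcases hmaps e₁ h₁ with h | h
    · exact ((hmoves h₁ h).1 rfl).elim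
    rcases hmaps e₂ h₂ with h' | h'
    · exact .inr ⟨h, h'⟩
    · exact ((hmoves h₂ h').1 rfl).elim

end EventuallyFixed

theorem not_exists_triangle_of_forall_meet {β : Type*} {R : β → β → Prop}
    (hR : ∀ x y, R x y → R y x) {e₁ e₂ : β}
    (hmeet : ∀ x y, R x y → x = e₁ ∨ x = e₂ ∨ y = e₁ ∨ y = e₂) (hexc : ¬ R e₁ e₂) :
    ¬ ∃ x y z, x ≠ y ∧ y ≠ z ∧ x ≠ z ∧ R x y ∧ R y z ∧ R x z := by
  rintro ⟨x, y, z, hxy, hyz, hxz, rxy, ryz, rxz⟩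
  have := hR _ _ rxy
  have := hR _ _ ryz
  have := hR _ _ rxz
  have := hmeet x y rxy
  have := hmeet y z ryz
  have := hmeet x z rxz
  grind

theorem stmt13_general {X : Type*} [MetricSpace X] (f : X → X)
    (e₁ e₂ : X)
    (hev : ∀ x : X, x ≠ e₁ → x ≠ e₂ → ∃ m : ℕ, f (f^[m] x) = f^[m] x)
    (hlim : ∀ x y : X, (∃ m : ℕ, f (f^[m] x) = f^[m] x) → (∃ m : ℕ, f (f^[m] y) = f^[m] y) →
      ∃ L : ℝ, Filter.Tendsto (fun n : ℕ => dist (f^[n] x) (f^[n] y)) atTop (nhds L)) :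
    (¬ ∃ x y z : X, x ≠ y ∧ y ≠ z ∧ x ≠ z ∧
        DC3pair f x y ∧ DC3pair f y z ∧ DC3pair f x z) ∧
    (∀ x y : X, DC3pair f x y → x = e₁ ∨ x = e₂ ∨ y = e₁ ∨ y = e₂) := by
  have hmeet : ∀ x y, DC3pair f x y → x = e₁ ∨ x = e₂ ∨ y = e₁ ∨ y = e₂ := fun x y hxy => by
    by_contra! ⟨hx₁, hx₂, hy₁, hy₂⟩
    obtain ⟨L, hL⟩ := hlim x y (hev x hx₁ hx₂) (hev y hy₁ hy₂)
    exact not_DC3pair_of_tendsto hL hxy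
  have hexc : ¬ DC3pair f e₁ e₂ := by
    rcases isEventuallyFixed_or_swap hev with ⟨h₁, h₂⟩ | ⟨h₁, h₂⟩
    · obtain ⟨L, hL⟩ := hlim e₁ e₂ h₁ h₂
      exact not_DC3pair_of_tendsto hL
    · refine not_DC3pair_of_tendsto (L := dist e₁ e₂) ?_
      simp only [dist_iterate_of_swap h₁ h₂, tendsto_const_nhds]
  exact ⟨not_exists_triangle_of_forall_meet (fun _ _ => DC3pair.symm) hmeet hexc, hmeet⟩

theorem stmt13 {X : Type*} [MetricSpace X] [CompactSpace X] (f : X → X) (hf : Continuous f)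
    (e₁ e₂ : X)
    (hev : ∀ x : X, x ≠ e₁ → x ≠ e₂ → ∃ m : ℕ, f (f^[m] x) = f^[m] x)
    (hlim : ∀ x y : X, (∃ m : ℕ, f (f^[m] x) = f^[m] x) → (∃ m : ℕ, f (f^[m] y) = f^[m] y) →
      ∃ L : ℝ, Filter.Tendsto (fun n : ℕ => dist (f^[n] x) (f^[n] y)) atTop (nhds L)) :
    (¬ ∃ x y z : X, x ≠ y ∧ y ≠ z ∧ x ≠ z ∧
        DC3pair f x y ∧ DC3pair f y z ∧ DC3pair f x z) ∧
    (∀ x y : X, DC3pair f x y → x = e₁ ∨ x = e₂ ∨ y = e₁ ∨ y = e₂) :=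
  stmt13_general f e₁ e₂ hev hlim
end

section
/- Let Λ ⊂ {0,1}^ℕ be the image of the map ν ∘ λ, where λ concatenates initial segments and ν inserts padding blocks of lengths a_1, a_2, a_3, … (an increasing sequence with (b_n + n)/a_{n+1} → 0, b_n = Σ_{i≤n} a_i), alternating blocks of 0's and blocks repeating successive symbols of λ(x). Then for any two distinct x̂, ŷ ∈ Λ and any δ ∈ (0,1], Φ_{(σ,x̂,ŷ)}(δ) = 0. -/
open Filter

/-!
Two points of `Λ` coming from `x ≠ y` differ in some coordinate `j`, and then in every block of `ν`
that copies the `j`-th symbol of one of the later segments of `λ x`. Such blocks occur for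
arbitrarily large indices `n + 1`, and block `n + 1` has length `a (n + 1)`, which dwarfs
everything before it, `b n`. Along the orbit, the two points are `δ`-close (`δ ≤ 1`) only at times
before that block starts, so the proportion of close times up to its end is at most
`b n / (b (n + 1) - 1) → 0`.
-/

open Finset

lemma liminf_eq_zero_of_frequently_le {ι : Type*} {l : Filter ι} {u : ι → ℝ} (h0 : ∀ i, 0 ≤ u i)
    (h : ∀ ε > 0, ∃ᶠ i in l, u i ≤ ε) : liminf u l = 0 := by
  have hcobdd : IsCoboundedUnder (· ≥ ·) l u := ⟨1, fun c hc =>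
    let ⟨_, hci, hi⟩ := (hc.and_frequently (l.frequently_map.2 (h 1 one_pos))).exists; hci.trans hi⟩
  refine le_antisymm (le_of_forall_pos_le_add fun ε hε => ?_) (le_liminf_of_le hcobdd (.of_forall h0))
  simpa using liminf_le_of_frequently_le (h ε hε) (isBoundedUnder_of ⟨0, h0⟩)

lemma shift_iterate_apply (k : ℕ) (x : ℕ → Bool) (n : ℕ) : (shift^[k] x) n = x (n + k) := by
  induction k generalizing x with
  | zero => rfl
  | succ k ih => rw [Function.iterate_succ_apply, ih]; rfl

lemma shiftDist_eq_one_of_ne {x y : ℕ → Bool} (h : x 0 ≠ y 0) : shiftDist x y = 1 := by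
  have hxy : x ≠ y := fun he => h (by rw [he])
  rw [shiftDist, if_neg hxy, Nat.sInf_eq_zero.mpr (Or.inl h), pow_zero]

lemma card_filter_shiftDist_lt_le {u v : ℕ → Bool} {δ : ℝ} (hδ : δ ≤ 1) {m n : ℕ}
    (h : ∀ k, m ≤ k → k ≤ n → u k ≠ v k) :
    #{k ∈ range (n + 1) | shiftDist (shift^[k] u) (shift^[k] v) < δ} ≤ m := by
  refine (card_le_card fun k hk => ?_).trans (card_range m).le
  rw [mem_filter, mem_range] at hk
  rw [mem_range]
  by_contra! hmk
  have hd : shiftDist (shift^[k] u) (shift^[k] v) = 1 :=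
    shiftDist_eq_one_of_ne (by simpa only [shift_iterate_apply, zero_add] using h k hmk (by omega))
  linarith [hk.2]

lemma Phi_shift_eq_zero_of_disagree {u v : ℕ → Bool} {δ : ℝ} (hδ : δ ≤ 1)
    (h : ∀ ε > 0, ∀ n₀ : ℕ, ∃ m n : ℕ, n₀ ≤ n ∧ (m : ℝ) ≤ ε * n ∧ ∀ k, m ≤ k → k ≤ n → u k ≠ v k) :
    Phi shiftDist shift u v δ = 0 := by
  refine liminf_eq_zero_of_frequently_le (fun n => by positivity) fun ε hε => ?_
  refine frequently_atTop.2 fun n₀ => ?_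
  obtain ⟨m, n, hn, hmn, hdis⟩ := h ε hε n₀
  refine ⟨n, hn, div_le_of_le_mul₀ n.cast_nonneg hε.le ?_⟩
  exact (Nat.cast_le.2 (card_filter_shiftDist_lt_le hδ hdis)).trans hmn

/-- `λ x` carries `x j` at position `triangle w + j` for every `j ≤ w`, and block `i` of `ν` is
a padding block exactly when `i` is a triangle number. -/
def triangle (t : ℕ) : ℕ := t * (t + 1) / 2

lemma triangle_succ (t : ℕ) : triangle (t + 1) = triangle t + (t + 1) := by
  have h : (t + 1) * (t + 1 + 1) = t * (t + 1) + 2 * (t + 1) := by ring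
  unfold triangle
  omega

lemma self_le_triangle (t : ℕ) : t ≤ triangle t := by
  induction t with
  | zero => exact le_rfl
  | succ k ih => rw [triangle_succ]; omega

lemma triangle_strictMono : StrictMono triangle :=
  strictMono_nat_of_lt_succ fun n => by rw [triangle_succ]; omega

lemma triangle_le_triangle_add_iff {t s : ℕ} (hs : s ≤ t) (t' : ℕ) :
    triangle t' ≤ triangle t + s ↔ t' ≤ t := by
  refine ⟨fun h => ?_, fun h => (triangle_strictMono.monotone h).trans (Nat.le_add_right _ _)⟩
  by_contra! ht
  have := triangle_strictMono.monotone ht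
  rw [triangle_succ] at this
  omega

lemma card_filter_triangle_le {t s : ℕ} (hs : s ≤ t) :
    #{t' ∈ Icc 1 (triangle t + s) | triangle t' ≤ triangle t + s} = t := by
  have hIcc : {t' ∈ Icc 1 (triangle t + s) | triangle t' ≤ triangle t + s} = Icc 1 t := by
    ext t'
    simp only [mem_filter, mem_Icc, triangle_le_triangle_add_iff hs]
    have := self_le_triangle t
    omega
  rw [hIcc, Nat.card_Icc, Nat.add_sub_cancel]

lemma not_exists_triangle_eq {t s : ℕ} (hs1 : 1 ≤ s) (hs : s ≤ t) :
    ¬ ∃ t' ∈ Icc 1 (triangle t + s), triangle t' = triangle t + s := by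
  rintro ⟨t', -, ht'⟩
  have hle := triangle_strictMono.monotone ((triangle_le_triangle_add_iff hs t').1 ht'.le)
  omega

section Lambda

variable {L N : (ℕ → Bool) → (ℕ → Bool)} {b : ℕ → ℕ}

lemma apply_triangle_add
    (hL : ∀ x : ℕ → Bool, ∀ n : ℕ, 1 ≤ n → ∀ j, j < n → L x (n*(n-1)/2 + j) = x j)
    (x : ℕ → Bool) {w j : ℕ} (hj : j ≤ w) : L x (triangle w + j) = x j := by
  have h := hL x (w + 1) (by omega) j (by omega)
  rwa [Nat.add_sub_cancel, Nat.mul_comm] at h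

lemma apply_of_mem_block
    (hN : ∀ z : ℕ → Bool, ∀ i : ℕ, 1 ≤ i → ∀ p : ℕ, b (i-1) ≤ p → p < b i →
      N z p = if (∃ t ∈ Finset.Icc 1 i, t*(t+1)/2 = i) then false
        else z (i - ((Finset.Icc 1 i).filter (fun t => t*(t+1)/2 ≤ i)).card - 1))
    (z : ℕ → Bool) {w j p : ℕ} (hj : j ≤ w) (hp : b (triangle (w + 1) + j) ≤ p)
    (hp' : p < b (triangle (w + 1) + j + 1)) : N z p = z (triangle w + j) := by
  have h := hN z (triangle (w + 1) + (j + 1)) (by omega) p hp hp'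
  simp only [show ∀ t, t * (t + 1) / 2 = triangle t from fun _ => rfl] at h
  rw [if_neg (not_exists_triangle_eq (by omega) (by omega)), card_filter_triangle_le (by omega),
    triangle_succ] at h
  rw [h]
  congr 1
  omega

end Lambda

section Blocks

variable {a b : ℕ → ℕ}

lemma b_succ (hb : ∀ n, b n = ∑ i ∈ Icc 1 n, a i) (n : ℕ) : b (n + 1) = b n + a (n + 1) := by
  rw [hb, hb, sum_Icc_succ_top (by omega)]

lemma self_le_b (hpos : ∀ i, 1 ≤ i → 0 < a i) (hb : ∀ n, b n = ∑ i ∈ Icc 1 n, a i) (n : ℕ) :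
    n ≤ b n := by
  rw [hb]
  simpa using card_nsmul_le_sum (Icc 1 n) a 1 fun i hi => hpos i (mem_Icc.1 hi).1

lemma eventually_b_le_mul (hpos : ∀ i, 1 ≤ i → 0 < a i) (hb : ∀ n, b n = ∑ i ∈ Icc 1 n, a i)
    (hab : Tendsto (fun n : ℕ => ((b n + n : ℕ) : ℝ) / (a (n+1) : ℝ)) atTop (nhds 0))
    {ε : ℝ} (hε : 0 < ε) : ∀ᶠ n in atTop, (b n : ℝ) ≤ ε * ((b (n + 1) - 1 : ℕ) : ℝ) := by
  filter_upwards [hab.eventually (eventually_lt_nhds hε),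
    tendsto_natCast_atTop_atTop.eventually_ge_atTop ε] with n hn hεn
  have ha : (0 : ℝ) < a (n + 1) := by exact_mod_cast hpos (n + 1) (by omega)
  rw [div_lt_iff₀ ha] at hn
  have hsucc := b_succ hb n
  have hb1 : 1 ≤ b (n + 1) := by have := hpos (n + 1) (by omega); omega
  rw [Nat.cast_sub hb1, hsucc]
  push_cast at hn ⊢
  nlinarith [(b n).cast_nonneg (α := ℝ)]

end Blocks

theorem stmt15_general (a : ℕ → ℕ) (hpos : ∀ i, 1 ≤ i → 0 < a i)
    (b : ℕ → ℕ) (hb : ∀ n, b n = ∑ i ∈ Finset.Icc 1 n, a i)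
    (hab : Filter.Tendsto (fun n : ℕ => ((b n + n : ℕ) : ℝ) / (a (n+1) : ℝ)) atTop (nhds 0))
    (L : (ℕ → Bool) → (ℕ → Bool))
    (hL : ∀ x : ℕ → Bool, ∀ n : ℕ, 1 ≤ n → ∀ j, j < n → L x (n*(n-1)/2 + j) = x j)
    (N : (ℕ → Bool) → (ℕ → Bool))
    (hN : ∀ z : ℕ → Bool, ∀ i : ℕ, 1 ≤ i → ∀ p : ℕ, b (i-1) ≤ p → p < b i →
      N z p = if (∃ t ∈ Finset.Icc 1 i, t*(t+1)/2 = i) then false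
        else z (i - ((Finset.Icc 1 i).filter (fun t => t*(t+1)/2 ≤ i)).card - 1)) :
    ∀ xh ∈ Set.range (fun x => N (L x)), ∀ yh ∈ Set.range (fun x => N (L x)), xh ≠ yh →
      ∀ δ : ℝ, 0 < δ → δ ≤ 1 → Phi shiftDist shift xh yh δ = 0 := by
  rintro _ ⟨x, rfl⟩ _ ⟨y, rfl⟩ hne δ - hδ
  obtain ⟨j, hj⟩ : ∃ j, x j ≠ y j := Function.ne_iff.1 fun hxy => hne (by rw [hxy])
  refine Phi_shift_eq_zero_of_disagree hδ fun ε hε n₀ => ?_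
  obtain ⟨M, hM⟩ := (eventually_b_le_mul hpos hb hab hε).exists_forall_of_atTop
  set w := max j (M + n₀)
  set n := triangle (w + 1) + j
  have hwn : w + 1 ≤ n := (self_le_triangle (w + 1)).trans (Nat.le_add_right _ _)
  have hnb : n ≤ b (n + 1) - 1 := by
    have := self_le_b hpos hb n
    have := b_succ hb n
    have := hpos (n + 1) (by omega)
    omega
  refine ⟨b n, b (n + 1) - 1, by omega, hM n (by omega), fun k hk hk' => ?_⟩
  have hk_lt : k < b (n + 1) := by omega
  have hblock : ∀ z, N (L z) k = z j := fun z => by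
    rw [apply_of_mem_block hN _ (le_max_left j _) hk hk_lt,
      apply_triangle_add hL _ (le_max_left j _)]
  show N (L x) k ≠ N (L y) k
  rwa [hblock, hblock]

theorem stmt15 (a : ℕ → ℕ) (hpos : ∀ i, 1 ≤ i → 0 < a i)
    (hmono : ∀ i j, 1 ≤ i → i < j → a i < a j)
    (b : ℕ → ℕ) (hb : ∀ n, b n = ∑ i ∈ Finset.Icc 1 n, a i)
    (hab : Filter.Tendsto (fun n : ℕ => ((b n + n : ℕ) : ℝ) / (a (n+1) : ℝ)) atTop (nhds 0))
    (L : (ℕ → Bool) → (ℕ → Bool))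
    (hL : ∀ x : ℕ → Bool, ∀ n : ℕ, 1 ≤ n → ∀ j, j < n → L x (n*(n-1)/2 + j) = x j)
    (N : (ℕ → Bool) → (ℕ → Bool))
    (hN : ∀ z : ℕ → Bool, ∀ i : ℕ, 1 ≤ i → ∀ p : ℕ, b (i-1) ≤ p → p < b i →
      N z p = if (∃ t ∈ Finset.Icc 1 i, t*(t+1)/2 = i) then false
        else z (i - ((Finset.Icc 1 i).filter (fun t => t*(t+1)/2 ≤ i)).card - 1)) :
    ∀ xh ∈ Set.range (fun x => N (L x)), ∀ yh ∈ Set.range (fun x => N (L x)), xh ≠ yh →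
      ∀ δ : ℝ, 0 < δ → δ ≤ 1 → Phi shiftDist shift xh yh δ = 0 :=
  stmt15_general a hpos b hb hab L hL N hN
end
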